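/- Let n ≥ 1, k ∈ ℕ, and let ρ : S^n → [0,1] be measurable with ∫_{S^n} ρ dσ = m > 0. Then limsup_{ε→0⁺} μ_k^ε(ρ) ≤ μ_k(ρ). -/

import Mathlib

open MeasureTheory Filter Topology Metric
open scoped NNReal ENNReal

noncomputable section

/-- The unit sphere `S^n` lives in `ℝ^{n+1}`. -/
abbrev Sph (n : ℕ) := EuclideanSpace ℝ (Fin (n+1))

/-- The surface (spherical) measure on `S^n`: the `n`-dimensional Hausdorff measure
restricted to the unit sphere. -/
def sphMeasure (n : ℕ) : Measure (Sph n) :=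
  (μH[(n : ℝ)]).restrict (Metric.sphere (0 : Sph n) 1)

/-- The tangential gradient of `U` at `x`: `∇U(x) - ⟨∇U(x), x⟩ x`. -/
def tgrad {n : ℕ} (U : Sph n → ℝ) (x : Sph n) : Sph n :=
  gradient U x - (inner ℝ (gradient U x) x : ℝ) • x

/-- `U` multiplied by the indicator of `{ρ > 0}`. -/
def mask {n : ℕ} (ρ : Sph n → ℝ) (U : Sph n → ℝ) : Sph n → ℝ :=
  fun x => if 0 < ρ x then U x else 0

/-- The functions `U i · 1_{ρ>0}` are linearly independent in `L²(σ)`. -/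
def IndepMasked {n k : ℕ} (ρ : Sph n → ℝ) (U : Fin (k+1) → Sph n → ℝ) : Prop :=
  ∀ a : Fin (k+1) → ℝ,
    (∀ᵐ x ∂ sphMeasure n, ∑ i, a i * mask ρ (U i) x = 0) → a = 0

/-- The restrictions of the `U i` to the sphere are linearly independent in `L²(σ)`. -/
def IndepPlain {n k : ℕ} (U : Fin (k+1) → Sph n → ℝ) : Prop :=
  ∀ a : Fin (k+1) → ℝ,
    (∀ᵐ x ∂ sphMeasure n, ∑ i, a i * U i x = 0) → a = 0

/-- Rayleigh quotient with weight `ρnum` in the numerator and `ρden` in the denominator. -/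
def rayleigh {n : ℕ} (ρnum ρden : Sph n → ℝ) (u : Sph n → ℝ) : ℝ :=
  (∫ x, ρnum x * ‖tgrad u x‖^2 ∂ sphMeasure n) /
  (∫ x, ρden x * (u x)^2 ∂ sphMeasure n)

/-- Generalized `k`-th Neumann eigenvalue of a density `ρ` on `S^n`. -/
def mu (n k : ℕ) (ρ : Sph n → ℝ) : ℝ :=
  sInf { t : ℝ | ∃ U : Fin (k+1) → Sph n → ℝ,
    (∀ i, ContDiff ℝ (⊤ : ℕ∞) (U i)) ∧ IndepMasked ρ U ∧
    t = sSup { r : ℝ | ∃ a : Fin (k+1) → ℝ, a ≠ 0 ∧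
      r = rayleigh ρ ρ (fun x => ∑ i, a i * U i x) } }

/-- Regularized `k`-th eigenvalue `μ_k^ε(ρ)`. -/
def muEps (n k : ℕ) (ε : ℝ) (ρ : Sph n → ℝ) : ℝ :=
  sInf { t : ℝ | ∃ U : Fin (k+1) → Sph n → ℝ,
    (∀ i, ContDiff ℝ (⊤ : ℕ∞) (U i)) ∧ IndepPlain U ∧
    t = sSup { r : ℝ | ∃ a : Fin (k+1) → ℝ, a ≠ 0 ∧
      r = rayleigh (fun x => ρ x + ε) (fun x => ρ x + ε^2) (fun x => ∑ i, a i * U i x) } }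

/-- A measurable density on `S^n` with values in `[0,1]`. -/
def IsDensity {n : ℕ} (ρ : Sph n → ℝ) : Prop :=
  Measurable ρ ∧ ∀ x, ρ x ∈ Set.Icc (0:ℝ) 1

/-- Weak-* convergence in `L^∞(σ)` of a sequence of densities. -/
def WeakStarTendsto {n : ℕ} (ρseq : ℕ → Sph n → ℝ) (ρ : Sph n → ℝ) : Prop :=
  ∀ f : Sph n → ℝ, Integrable f (sphMeasure n) →
    Tendsto (fun j => ∫ x, ρseq j x * f x ∂ sphMeasure n) atTop
      (𝓝 (∫ x, ρ x * f x ∂ sphMeasure n))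


namespace SphAux

lemma lipschitzOnWith_normalize {E : Type*} [NormedAddCommGroup E] [NormedSpace ℝ E] :
    LipschitzOnWith 2 (fun x : E => ‖x‖⁻¹ • x) {x : E | 1 ≤ ‖x‖} := by
  rw [lipschitzOnWith_iff_dist_le_mul]
  intro x hx y hy
  simp only [Set.mem_setOf_eq] at hx hy
  have hx0 : (0:ℝ) < ‖x‖ := lt_of_lt_of_le one_pos hx
  have hy0 : (0:ℝ) < ‖y‖ := lt_of_lt_of_le one_pos hy
  have h1 : dist (‖x‖⁻¹ • x) (‖y‖⁻¹ • y) ≤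
      dist (‖x‖⁻¹ • x) (‖x‖⁻¹ • y) + dist (‖x‖⁻¹ • y) (‖y‖⁻¹ • y) := dist_triangle _ _ _
  have h2 : dist (‖x‖⁻¹ • x) (‖x‖⁻¹ • y) ≤ dist x y := by
    rw [dist_eq_norm, ← smul_sub, norm_smul, norm_inv, norm_norm, ← dist_eq_norm]
    calc ‖x‖⁻¹ * dist x y ≤ 1 * dist x y := by
          apply mul_le_mul_of_nonneg_right _ dist_nonneg
          exact inv_le_one_of_one_le₀ hx
      _ = dist x y := one_mul _
  have h3 : dist (‖x‖⁻¹ • y) (‖y‖⁻¹ • y) ≤ dist x y := by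
    rw [dist_eq_norm, ← sub_smul, norm_smul]
    have : ‖(‖x‖⁻¹ - ‖y‖⁻¹ : ℝ)‖ = |‖y‖ - ‖x‖| / (‖x‖ * ‖y‖) := by
      rw [Real.norm_eq_abs, inv_sub_inv hx0.ne' hy0.ne', abs_div,
        abs_of_pos (mul_pos hx0 hy0)]
    rw [this]
    have hb : |‖y‖ - ‖x‖| ≤ ‖x - y‖ := by
      rw [abs_sub_comm]
      exact abs_norm_sub_norm_le x y
    calc |‖y‖ - ‖x‖| / (‖x‖ * ‖y‖) * ‖y‖ = |‖y‖ - ‖x‖| / ‖x‖ := by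
          field_simp
      _ ≤ |‖y‖ - ‖x‖| / 1 := by
          apply div_le_div_of_nonneg_left (abs_nonneg _) one_pos hx
      _ = |‖y‖ - ‖x‖| := div_one _
      _ ≤ ‖x - y‖ := hb
      _ = dist x y := (dist_eq_norm x y).symm
  have h4 : dist (‖x‖⁻¹ • x) (‖y‖⁻¹ • y) ≤ dist x y + dist x y :=
    le_trans h1 (add_le_add h2 h3)
  push_cast
  linarith


lemma abs_coord_le {m : ℕ} (x : EuclideanSpace ℝ (Fin m)) (j : Fin m) : |x j| ≤ ‖x‖ := by
  rw [EuclideanSpace.norm_eq, ← Real.sqrt_sq_eq_abs]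
  apply Real.sqrt_le_sqrt
  have : (x j)^2 ≤ ∑ l, ‖x l‖^2 := by
    apply Finset.single_le_sum (f := fun l => ‖x l‖^2) (fun l _ => by positivity)
      (Finset.mem_univ j) |>.trans_eq' (by rw [Real.norm_eq_abs, sq_abs])
  exact this

def nrm (n : ℕ) : Sph n → Sph n := fun x => ‖x‖⁻¹ • x

def phi (n : ℕ) (i : Fin (n+1)) (s : ℝ) : (Fin n → ℝ) → Sph n :=
  fun z => (WithLp.equiv 2 (∀ _ : Fin (n+1), ℝ)).symm (i.insertNth (α := fun _ => ℝ) s z)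

def K0 (n : ℕ) : ℝ≥0 := (Fintype.card (Fin (n+1)) : ℝ≥0) ^ ((1 / (2:ℝ≥0∞))).toReal

lemma lipschitz_equiv_symm (n : ℕ) :
    LipschitzWith (K0 n) ((WithLp.equiv 2 (∀ _ : Fin (n+1), ℝ)).symm) :=
  PiLp.lipschitzWith_toLp 2 (fun _ : Fin (n+1) => ℝ)

lemma phi_lipschitz (n : ℕ) (i : Fin (n+1)) (s : ℝ) : LipschitzWith (K0 n) (phi n i s) := by
  have h1 : LipschitzWith 1 (fun z : Fin n → ℝ => i.insertNth (α := fun _ => ℝ) s z) := by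
    apply LipschitzWith.of_dist_le_mul
    intro z z'
    rw [Fin.dist_insertNth_insertNth (α := fun _ : Fin (n+1) => ℝ)]
    simp [dist_nonneg]
  have h2 := (lipschitz_equiv_symm n).comp h1
  rw [mul_one] at h2
  exact h2

lemma cover (n : ℕ) : sphere (0 : Sph n) 1 ⊆
    ⋃ (i : Fin (n+1)), ⋃ (b : Bool),
      nrm n '' ((phi n i (cond b 1 (-1)) '' closedBall (0 : Fin n → ℝ) (n+1))
        ∩ {x : Sph n | 1 ≤ ‖x‖}) := by
  intro y hy
  have hy1 : ‖y‖ = 1 := mem_sphere_zero_iff_norm.mp hy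
  obtain ⟨i, -, hmax⟩ := Finset.exists_max_image Finset.univ (fun j => |y j|)
    ⟨0, Finset.mem_univ 0⟩
  set t := y i with ht
  have hsum : ∑ j, (y j)^2 = 1 := by
    have := EuclideanSpace.norm_eq y
    rw [hy1] at this
    have h2 : Real.sqrt (∑ l, ‖y l‖^2) = 1 := this.symm
    have h3 := congrArg (·^2) h2
    simp only [Real.sq_sqrt (by positivity : (0:ℝ) ≤ ∑ l, ‖y l‖^2)] at h3
    simpa [Real.norm_eq_abs, sq_abs] using h3
  have ht2 : 1 ≤ ((n:ℝ)+1) * t^2 := by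
    have hb : ∀ j ∈ Finset.univ, (y j)^2 ≤ t^2 := by
      intro j _
      have := hmax j (Finset.mem_univ j)
      calc (y j)^2 = |y j|^2 := (sq_abs _).symm
        _ ≤ |t|^2 := pow_le_pow_left₀ (abs_nonneg _) this 2
        _ = t^2 := sq_abs _
    have := Finset.sum_le_card_nsmul Finset.univ (fun j => (y j)^2) (t^2) hb
    rw [hsum] at this
    simp only [Finset.card_univ, Fintype.card_fin, nsmul_eq_mul] at this
    push_cast at this ⊢
    linarith
  have ht0 : t ≠ 0 := by
    intro h; rw [h] at ht2; norm_num at ht2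
  have habs : 0 < |t| := abs_pos.mpr ht0
  have hcle : |t| ≤ 1 := by
    have := abs_coord_le y i
    rwa [hy1] at this
  set x : Sph n := |t|⁻¹ • y with hxdef
  have hxi : x i = t / |t| := by
    show (|t|⁻¹ • y) i = t / |t|
    simp only [PiLp.smul_apply, smul_eq_mul]
    rw [div_eq_inv_mul]
  have hxnorm : ‖x‖ = |t|⁻¹ := by
    rw [hxdef, norm_smul, hy1, mul_one, Real.norm_eq_abs, abs_inv, abs_abs]
  have hx1 : 1 ≤ ‖x‖ := by
    rw [hxnorm]
    exact (one_le_inv₀ habs).mpr hcle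
  have hnrm : nrm n x = y := by
    show ‖x‖⁻¹ • x = y
    rw [hxnorm, inv_inv, hxdef, smul_smul, mul_inv_cancel₀ habs.ne', one_smul]
  have h5 : 1 ≤ ((n:ℝ)+1) * |t| := by nlinarith [sq_abs t, abs_nonneg t, hcle]
  have hxb : ‖x‖ ≤ (n:ℝ)+1 := by
    rw [hxnorm, inv_eq_one_div, div_le_iff₀ habs]
    linarith
  have hb : (cond (decide (0 < t)) (1:ℝ) (-1)) = t / |t| := by
    by_cases h : 0 < t
    · simp [h, abs_of_pos h, div_self ht0]
    · have hneg : t < 0 := (ht0.lt_or_gt).resolve_right h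
      have hd : decide (0 < t) = false := by simp [h]
      rw [hd]
      simp [abs_of_neg hneg, div_neg, div_self ht0]
  simp only [Set.mem_iUnion]
  refine ⟨i, decide (0 < t), x, ⟨⟨i.removeNth (fun j => x j), ?_, ?_⟩, hx1⟩, hnrm⟩
  · rw [mem_closedBall_zero_iff]
    apply pi_norm_le_iff_of_nonneg (by positivity) |>.mpr
    intro j
    calc ‖x (i.succAbove j)‖ = |x (i.succAbove j)| := Real.norm_eq_abs _
      _ ≤ ‖x‖ := abs_coord_le x _
      _ ≤ (n:ℝ)+1 := hxb
  · show (WithLp.equiv 2 (∀ _ : Fin (n+1), ℝ)).symm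
        (i.insertNth (α := fun _ => ℝ) (cond (decide (0 < t)) (1:ℝ) (-1))
          (i.removeNth (fun j => x j))) = x
    rw [hb, ← hxi]
    rw [Fin.insertNth_self_removeNth (α := fun _ => ℝ) i (fun j => x j)]
    rfl

lemma sphere_finite (n : ℕ) : μH[(n : ℝ)] (sphere (0 : Sph n) 1) < ⊤ := by
  have hQ : μH[(n : ℝ)] (closedBall (0 : Fin n → ℝ) (n+1)) < ⊤ := by
    have hvol : (μH[(n : ℝ)] : Measure (Fin n → ℝ)) = volume := by
      have := MeasureTheory.hausdorffMeasure_pi_real (ι := Fin n)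
      simpa using this
    rw [hvol]
    exact (isCompact_closedBall 0 _).measure_lt_top
  have hterm : ∀ (i : Fin (n+1)) (b : Bool),
      μH[(n : ℝ)] (nrm n '' ((phi n i (cond b 1 (-1)) '' closedBall (0 : Fin n → ℝ) (n+1))
        ∩ {x : Sph n | 1 ≤ ‖x‖})) < ⊤ := by
    intro i b
    have hnn : (0:ℝ) ≤ (n:ℝ) := Nat.cast_nonneg n
    have l1 : LipschitzOnWith 2 (nrm n)
        ((phi n i (cond b 1 (-1)) '' closedBall (0 : Fin n → ℝ) (n+1)) ∩ {x : Sph n | 1 ≤ ‖x‖}) :=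
      (lipschitzOnWith_normalize (E := Sph n)).mono Set.inter_subset_right
    calc μH[(n : ℝ)] (nrm n '' _) ≤ (2:ℝ≥0) ^ (n:ℝ) * μH[(n : ℝ)] _ :=
          l1.hausdorffMeasure_image_le hnn
      _ ≤ (2:ℝ≥0) ^ (n:ℝ) * μH[(n : ℝ)]
            (phi n i (cond b 1 (-1)) '' closedBall (0 : Fin n → ℝ) (n+1)) := by
          exact mul_le_mul_right (measure_mono Set.inter_subset_left) _
      _ ≤ (2:ℝ≥0) ^ (n:ℝ) * ((K0 n : ℝ≥0∞) ^ (n:ℝ) * μH[(n : ℝ)]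
            (closedBall (0 : Fin n → ℝ) (n+1))) := by
          gcongr
          exact (phi_lipschitz n i _).hausdorffMeasure_image_le hnn _
      _ < ⊤ := by
          apply ENNReal.mul_lt_top
          · exact ENNReal.rpow_lt_top_of_nonneg hnn ENNReal.coe_ne_top
          apply ENNReal.mul_lt_top _ hQ
          exact ENNReal.rpow_lt_top_of_nonneg hnn ENNReal.coe_ne_top
  calc μH[(n : ℝ)] (sphere (0 : Sph n) 1) ≤ μH[(n : ℝ)]
        (⋃ (i : Fin (n+1)), ⋃ (b : Bool),
          nrm n '' ((phi n i (cond b 1 (-1)) '' closedBall (0 : Fin n → ℝ) (n+1))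
            ∩ {x : Sph n | 1 ≤ ‖x‖})) := measure_mono (cover n)
    _ ≤ ∑ i : Fin (n+1), ∑ b : Bool, μH[(n : ℝ)]
          (nrm n '' ((phi n i (cond b 1 (-1)) '' closedBall (0 : Fin n → ℝ) (n+1))
            ∩ {x : Sph n | 1 ≤ ‖x‖})) := by
        refine le_trans (measure_iUnion_fintype_le _ _) ?_
        exact Finset.sum_le_sum fun i _ => measure_iUnion_fintype_le _ _
    _ < ⊤ := by
        apply ENNReal.sum_lt_top.mpr
        intro i _
        exact ENNReal.sum_lt_top.mpr fun b _ => hterm i b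

instance sphMeasure_finite (n : ℕ) : IsFiniteMeasure (sphMeasure n) := by
  constructor
  rw [sphMeasure, Measure.restrict_apply_univ]
  exact sphere_finite n

lemma sphMeasure_singleton (n : ℕ) (hn : 1 ≤ n) (x : Sph n) : sphMeasure n {x} = 0 := by
  have hpos : (0:ℝ) < n := by exact_mod_cast hn
  haveI := MeasureTheory.Measure.noAtoms_hausdorff (Sph n) hpos
  refine le_antisymm ?_ (zero_le)
  calc sphMeasure n {x} ≤ μH[(n : ℝ)] {x} := Measure.restrict_le_self _
    _ = 0 := measure_singleton x

section Calc

variable {n k : ℕ}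

lemma tgrad_continuous {U : Sph n → ℝ} (hU : ContDiff ℝ (⊤ : ℕ∞) U) : Continuous (tgrad U) := by
  have hf : Continuous (fderiv ℝ U) := hU.continuous_fderiv (by simp)
  have hg : Continuous (gradient U) :=
    (InnerProductSpace.toDual ℝ (Sph n)).symm.continuous.comp hf
  exact hg.sub ((Continuous.inner (𝕜 := ℝ) hg continuous_id).smul continuous_id)

lemma gradient_sum (U : Fin (k+1) → Sph n → ℝ) (hU : ∀ i, ContDiff ℝ (⊤ : ℕ∞) (U i))
    (a : Fin (k+1) → ℝ) (x : Sph n) :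
    gradient (fun y => ∑ i, a i * U i y) x = ∑ i, a i • gradient (U i) x := by
  have hdiff : ∀ i, DifferentiableAt ℝ (U i) x := fun i =>
    ((hU i).differentiable (by simp)).differentiableAt
  have h1 : fderiv ℝ (fun y => ∑ i, a i * U i y) x = ∑ i, a i • fderiv ℝ (U i) x := by
    rw [fderiv_fun_sum (fun i _ => (hdiff i).const_mul (a i))]
    exact Finset.sum_congr rfl fun i _ => fderiv_const_mul (hdiff i) (a i)
  unfold gradient
  rw [h1, map_sum]
  exact Finset.sum_congr rfl fun i _ => by rw [_root_.map_smul]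

lemma tgrad_sum (U : Fin (k+1) → Sph n → ℝ) (hU : ∀ i, ContDiff ℝ (⊤ : ℕ∞) (U i))
    (a : Fin (k+1) → ℝ) (x : Sph n) :
    tgrad (fun y => ∑ i, a i * U i y) x = ∑ i, a i • tgrad (U i) x := by
  unfold tgrad
  rw [gradient_sum U hU a x, sum_inner]
  simp only [real_inner_smul_left, smul_sub, smul_smul]
  rw [Finset.sum_sub_distrib, ← Finset.sum_smul]

end Calc

section Quad

open RealInnerProductSpace

variable {n k : ℕ}

lemma ae_sphere (n : ℕ) : ∀ᵐ x ∂ sphMeasure n, x ∈ Metric.sphere (0 : Sph n) 1 :=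
  ae_restrict_mem isClosed_sphere.measurableSet

lemma integrable_weighted {w g : Sph n → ℝ} (hw : AEStronglyMeasurable w (sphMeasure n))
    {Cw : ℝ} (hwb : ∀ x, |w x| ≤ Cw) (hg : Continuous g) :
    Integrable (fun x => w x * g x) (sphMeasure n) := by
  obtain ⟨C, hC⟩ := (isCompact_sphere (0 : Sph n) 1).exists_bound_of_continuousOn hg.continuousOn
  refine Integrable.mono' (integrable_const (Cw * C)) (hw.mul hg.aestronglyMeasurable) ?_
  filter_upwards [ae_sphere n] with x hx
  have h2 : (0:ℝ) ≤ Cw := le_trans (abs_nonneg _) (hwb x)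
  calc ‖w x * g x‖ = |w x| * ‖g x‖ := by rw [norm_mul, Real.norm_eq_abs]
    _ ≤ Cw * C := mul_le_mul (hwb x) (hC x hx) (norm_nonneg _) h2

variable {F : Type*} [NormedAddCommGroup F] [InnerProductSpace ℝ F]

lemma sum_smul_norm_sq (v : Fin (k+1) → Sph n → F) (a : Fin (k+1) → ℝ) (w : Sph n → ℝ)
    (x : Sph n) :
    w x * ‖∑ i, a i • v i x‖^2 = ∑ i, ∑ j, (a i * a j) * (w x * ⟪v i x, v j x⟫) := by
  rw [← real_inner_self_eq_norm_sq]
  simp only [sum_inner, inner_sum, real_inner_smul_left, real_inner_smul_right, Finset.mul_sum]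
  refine Finset.sum_congr rfl fun i _ => Finset.sum_congr rfl fun j _ => ?_
  rw [real_inner_comm (v j x) (v i x)]
  ring

lemma continuous_sum_norm_sq {v : Fin (k+1) → Sph n → F} (hv : ∀ i, Continuous (v i))
    (a : Fin (k+1) → ℝ) : Continuous (fun x => ‖∑ i, a i • v i x‖^2) :=
  ((continuous_finset_sum _ fun i _ => (hv i).const_smul (a i)).norm).pow 2

lemma integrable_quad {w : Sph n → ℝ} (hw : AEStronglyMeasurable w (sphMeasure n))
    {Cw : ℝ} (hwb : ∀ x, |w x| ≤ Cw) {v : Fin (k+1) → Sph n → F} (hv : ∀ i, Continuous (v i))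
    (a : Fin (k+1) → ℝ) :
    Integrable (fun x => w x * ‖∑ i, a i • v i x‖^2) (sphMeasure n) :=
  integrable_weighted hw hwb (continuous_sum_norm_sq hv a)

lemma quad_expand {w : Sph n → ℝ} (hw : AEStronglyMeasurable w (sphMeasure n))
    {Cw : ℝ} (hwb : ∀ x, |w x| ≤ Cw) {v : Fin (k+1) → Sph n → F} (hv : ∀ i, Continuous (v i))
    (a : Fin (k+1) → ℝ) :
    ∫ x, w x * ‖∑ i, a i • v i x‖^2 ∂ sphMeasure n
      = ∑ i, ∑ j, (a i * a j) * ∫ x, w x * ⟪v i x, v j x⟫ ∂ sphMeasure n := by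
  have hgram : ∀ i j : Fin (k+1),
      Integrable (fun x => w x * ⟪v i x, v j x⟫) (sphMeasure n) := fun i j =>
    integrable_weighted hw hwb ((hv i).inner (hv j))
  have h1 : (fun x => w x * ‖∑ i, a i • v i x‖^2)
      = fun x => ∑ i, ∑ j, (a i * a j) * (w x * ⟪v i x, v j x⟫) :=
    funext fun x => sum_smul_norm_sq v a w x
  rw [h1, integral_finset_sum _ (fun i _ =>
    integrable_finset_sum _ (fun j _ => ((hgram i j).const_mul _)))]
  refine Finset.sum_congr rfl fun i _ => ?_
  rw [integral_finset_sum _ (fun j _ => ((hgram i j).const_mul _))]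
  exact Finset.sum_congr rfl fun j _ => integral_const_mul _ _

lemma quad_continuous {w : Sph n → ℝ} (hw : AEStronglyMeasurable w (sphMeasure n))
    {Cw : ℝ} (hwb : ∀ x, |w x| ≤ Cw) {v : Fin (k+1) → Sph n → F} (hv : ∀ i, Continuous (v i)) :
    Continuous (fun a : Fin (k+1) → ℝ =>
      ∫ x, w x * ‖∑ i, a i • v i x‖^2 ∂ sphMeasure n) := by
  have h1 : (fun a : Fin (k+1) → ℝ => ∫ x, w x * ‖∑ i, a i • v i x‖^2 ∂ sphMeasure n)
      = fun a => ∑ i, ∑ j, (a i * a j) * ∫ x, w x * ⟪v i x, v j x⟫ ∂ sphMeasure n :=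
    funext fun a => quad_expand hw hwb hv a
  rw [h1]
  refine continuous_finset_sum _ fun i _ => continuous_finset_sum _ fun j _ => ?_
  exact ((continuous_apply i).mul (continuous_apply j)).mul continuous_const

lemma quad_homog {w : Sph n → ℝ} (hw : AEStronglyMeasurable w (sphMeasure n))
    {Cw : ℝ} (hwb : ∀ x, |w x| ≤ Cw) {v : Fin (k+1) → Sph n → F} (hv : ∀ i, Continuous (v i))
    (a : Fin (k+1) → ℝ) (s : ℝ) :
    ∫ x, w x * ‖∑ i, (s • a) i • v i x‖^2 ∂ sphMeasure n
      = s^2 * ∫ x, w x * ‖∑ i, a i • v i x‖^2 ∂ sphMeasure n := by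
  rw [quad_expand hw hwb hv, quad_expand hw hwb hv, Finset.mul_sum]
  refine Finset.sum_congr rfl fun i _ => ?_
  rw [Finset.mul_sum]
  refine Finset.sum_congr rfl fun j _ => ?_
  simp only [Pi.smul_apply, smul_eq_mul]
  ring

end Quad

section Key

variable {n k : ℕ}

lemma mask_sum (ρ : Sph n → ℝ) (U : Fin (k+1) → Sph n → ℝ) (a : Fin (k+1) → ℝ) (x : Sph n) :
    ∑ i, a i * mask ρ (U i) x = if 0 < ρ x then ∑ i, a i * U i x else 0 := by
  unfold mask
  by_cases h : 0 < ρ x <;> simp [h]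

set_option maxHeartbeats 1000000 in
lemma key (n k : ℕ) (ρ : Sph n → ℝ) (hρ : IsDensity ρ)
    (U : Fin (k+1) → Sph n → ℝ) (hUc : ∀ i, ContDiff ℝ (⊤ : ℕ∞) (U i)) (hUm : IndepMasked ρ U) :
    ∃ K : ℝ, 0 ≤ K ∧ ∀ ε : ℝ, 0 < ε → muEps n k ε ρ ≤
      sSup { r : ℝ | ∃ a : Fin (k+1) → ℝ, a ≠ 0 ∧
        r = rayleigh ρ ρ (fun x => ∑ i, a i * U i x) } + ε * K := by
  have hρm : AEStronglyMeasurable ρ (sphMeasure n) := hρ.1.aestronglyMeasurable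
  have hρb : ∀ x, |ρ x| ≤ 1 := fun x => abs_le.mpr ⟨by linarith [(hρ.2 x).1], (hρ.2 x).2⟩
  have h1m : AEStronglyMeasurable (fun _ : Sph n => (1:ℝ)) (sphMeasure n) :=
    aestronglyMeasurable_const
  have honeb : ∀ x : Sph n, |(1:ℝ)| ≤ 1 := fun _ => by norm_num
  have hUcont : ∀ i, Continuous (U i) := fun i => (hUc i).continuous
  set w : Fin (k+1) → Sph n → Sph n := fun i => tgrad (U i) with hwdef
  have hwcont : ∀ i, Continuous (w i) := fun i => tgrad_continuous (hUc i)
  set Nf : (Fin (k+1) → ℝ) → ℝ :=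
    fun a => ∫ x, ρ x * ‖∑ i, a i • w i x‖^2 ∂ sphMeasure n with hNdef
  set Pf : (Fin (k+1) → ℝ) → ℝ :=
    fun a => ∫ x, (1:ℝ) * ‖∑ i, a i • w i x‖^2 ∂ sphMeasure n with hPdef
  set Df : (Fin (k+1) → ℝ) → ℝ :=
    fun a => ∫ x, ρ x * ‖∑ i, a i • (U i x)‖^2 ∂ sphMeasure n with hDdef
  set Qf : (Fin (k+1) → ℝ) → ℝ :=
    fun a => ∫ x, (1:ℝ) * ‖∑ i, a i • (U i x)‖^2 ∂ sphMeasure n with hQdef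
  -- integrability
  have hIntN : ∀ a : Fin (k+1) → ℝ, Integrable (fun x => ρ x * ‖∑ i, a i • w i x‖^2) (sphMeasure n) :=
    fun a => integrable_quad hρm hρb hwcont a
  have hIntP : ∀ a : Fin (k+1) → ℝ, Integrable (fun x => (1:ℝ) * ‖∑ i, a i • w i x‖^2) (sphMeasure n) :=
    fun a => integrable_quad h1m honeb hwcont a
  have hIntD : ∀ a : Fin (k+1) → ℝ, Integrable (fun x => ρ x * ‖∑ i, a i • (U i x)‖^2) (sphMeasure n) :=
    fun a => integrable_quad hρm hρb hUcont a
  have hIntQ : ∀ a : Fin (k+1) → ℝ, Integrable (fun x => (1:ℝ) * ‖∑ i, a i • (U i x)‖^2) (sphMeasure n) :=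
    fun a => integrable_quad h1m honeb hUcont a
  -- nonnegativity
  have hNnn : ∀ a : Fin (k+1) → ℝ, 0 ≤ Nf a := fun a =>
    integral_nonneg fun x => mul_nonneg (hρ.2 x).1 (by positivity)
  have hPnn : ∀ a : Fin (k+1) → ℝ, 0 ≤ Pf a := fun a =>
    integral_nonneg fun x => mul_nonneg zero_le_one (by positivity)
  have hDnn : ∀ a : Fin (k+1) → ℝ, 0 ≤ Df a := fun a =>
    integral_nonneg fun x => mul_nonneg (hρ.2 x).1 (by positivity)
  have hQnn : ∀ a : Fin (k+1) → ℝ, 0 ≤ Qf a := fun a =>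
    integral_nonneg fun x => mul_nonneg zero_le_one (by positivity)
  -- rayleigh rewriting
  have husq : ∀ (a : Fin (k+1) → ℝ) (x : Sph n),
      (∑ i, a i * U i x)^2 = ‖∑ i, a i • (U i x)‖^2 := by
    intro a x
    simp [smul_eq_mul, Real.norm_eq_abs, sq_abs]
  have hray : ∀ a : Fin (k+1) → ℝ,
      rayleigh ρ ρ (fun x => ∑ i, a i * U i x) = Nf a / Df a := by
    intro a
    unfold rayleigh
    have e1 : (fun x => ρ x * ‖tgrad (fun y => ∑ i, a i * U i y) x‖ ^ 2)
        = fun x => ρ x * ‖∑ i, a i • w i x‖^2 :=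
      funext fun x => by rw [tgrad_sum U hUc a x]
    have e2 : (fun x => ρ x * (∑ i, a i * U i x) ^ 2)
        = fun x => ρ x * ‖∑ i, a i • (U i x)‖^2 :=
      funext fun x => by rw [husq a x]
    rw [e1, e2]
  have hrayeps : ∀ (ε : ℝ) (a : Fin (k+1) → ℝ),
      rayleigh (fun x => ρ x + ε) (fun x => ρ x + ε^2) (fun x => ∑ i, a i * U i x)
        = (Nf a + ε * Pf a) / (Df a + ε^2 * Qf a) := by
    intro ε a
    unfold rayleigh
    have e1 : (fun x => (ρ x + ε) * ‖tgrad (fun y => ∑ i, a i * U i y) x‖ ^ 2)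
        = fun x => ρ x * ‖∑ i, a i • w i x‖^2 + ε * ((1:ℝ) * ‖∑ i, a i • w i x‖^2) :=
      funext fun x => by rw [tgrad_sum U hUc a x]; ring
    have e2 : (fun x => (ρ x + ε^2) * (∑ i, a i * U i x) ^ 2)
        = fun x => ρ x * ‖∑ i, a i • (U i x)‖^2 + ε^2 * ((1:ℝ) * ‖∑ i, a i • (U i x)‖^2) :=
      funext fun x => by rw [husq a x]; ring
    rw [e1, e2, integral_add (hIntN a) ((hIntP a).const_mul _),
      integral_add (hIntD a) ((hIntQ a).const_mul _)]
    simp only [hNdef, hPdef, hDdef, hQdef, integral_const_mul, one_mul]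
  -- continuity
  have hNc : Continuous Nf := quad_continuous hρm hρb hwcont
  have hPc : Continuous Pf := quad_continuous h1m honeb hwcont
  have hDc : Continuous Df := quad_continuous hρm hρb hUcont
  -- homogeneity
  have hNh : ∀ (a : Fin (k+1) → ℝ) (s : ℝ), Nf (s • a) = s^2 * Nf a := fun a s => quad_homog hρm hρb hwcont a s
  have hPh : ∀ (a : Fin (k+1) → ℝ) (s : ℝ), Pf (s • a) = s^2 * Pf a := fun a s => quad_homog h1m honeb hwcont a s
  have hDh : ∀ (a : Fin (k+1) → ℝ) (s : ℝ), Df (s • a) = s^2 * Df a := fun a s => quad_homog hρm hρb hUcont a s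
  have hQh : ∀ (a : Fin (k+1) → ℝ) (s : ℝ), Qf (s • a) = s^2 * Qf a := fun a s => quad_homog h1m honeb hUcont a s
  -- positive definiteness of Df
  have hDf0 : ∀ a : Fin (k+1) → ℝ, Df a = 0 → a = 0 := by
    intro a h0
    have hnn : (0:Sph n → ℝ) ≤ fun x => ρ x * ‖∑ i, a i • (U i x)‖^2 :=
      fun x => mul_nonneg (hρ.2 x).1 (by positivity)
    have hae := (integral_eq_zero_iff_of_nonneg hnn (hIntD a)).mp h0
    apply hUm a
    filter_upwards [hae] with x hx
    rw [mask_sum]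
    by_cases h : 0 < ρ x
    · have hx' : ρ x * ‖∑ i, a i • (U i x)‖^2 = 0 := hx
      have h2 : ‖∑ i, a i • (U i x)‖^2 = 0 := by
        rcases mul_eq_zero.mp hx' with h' | h'
        · exact absurd h' h.ne'
        · exact h'
      have h3 : (∑ i, a i * U i x) = 0 := by
        have := husq a x
        rw [h2] at this
        exact pow_eq_zero_iff (n := 2) (by norm_num) |>.mp this
      rw [if_pos h, h3]
    · rw [if_neg h]
  -- compactness setup
  have hSkc : IsCompact (Metric.sphere (0 : Fin (k+1) → ℝ) 1) := isCompact_sphere _ _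
  have hSkne : (Metric.sphere (0 : Fin (k+1) → ℝ) 1).Nonempty :=
    NormedSpace.sphere_nonempty.mpr zero_le_one
  obtain ⟨b0, hb0S, hb0min⟩ := hSkc.exists_isMinOn hSkne hDc.continuousOn
  obtain ⟨bP, hbPS, hbPmax⟩ := hSkc.exists_isMaxOn hSkne hPc.continuousOn
  obtain ⟨bN, hbNS, hbNmax⟩ := hSkc.exists_isMaxOn hSkne hNc.continuousOn
  have hcpos : 0 < Df b0 := by
    rcases (hDnn b0).lt_or_eq with h | h
    · exact h
    · exfalso
      have hb0 : b0 = 0 := hDf0 b0 h.symm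
      have := mem_sphere_zero_iff_norm.mp hb0S
      rw [hb0, norm_zero] at this
      exact one_ne_zero this.symm
  -- normalization helper
  have hnormlz : ∀ a : Fin (k+1) → ℝ, a ≠ 0 → ∃ b : Fin (k+1) → ℝ,
      b ∈ Metric.sphere (0 : Fin (k+1) → ℝ) 1 ∧ b ≠ 0 ∧
      Nf a = ‖a‖^2 * Nf b ∧ Pf a = ‖a‖^2 * Pf b ∧ Df a = ‖a‖^2 * Df b ∧
      Qf a = ‖a‖^2 * Qf b := by
    intro a ha
    have hs : ‖a‖ ≠ 0 := norm_ne_zero_iff.mpr ha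
    refine ⟨‖a‖⁻¹ • a, ?_, ?_, ?_, ?_, ?_, ?_⟩
    · rw [mem_sphere_zero_iff_norm, norm_smul, norm_inv, norm_norm, inv_mul_cancel₀ hs]
    · intro h
      have : a = 0 := by
        have := congrArg (fun z => ‖a‖ • z) h
        simpa [smul_smul, mul_inv_cancel₀ hs] using this
      exact ha this
    · rw [← hNh _ ‖a‖, smul_smul, mul_inv_cancel₀ hs, one_smul]
    · rw [← hPh _ ‖a‖, smul_smul, mul_inv_cancel₀ hs, one_smul]
    · rw [← hDh _ ‖a‖, smul_smul, mul_inv_cancel₀ hs, one_smul]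
    · rw [← hQh _ ‖a‖, smul_smul, mul_inv_cancel₀ hs, one_smul]
  -- the masked Rayleigh set
  have hRb : ∀ r ∈ { r : ℝ | ∃ a : Fin (k+1) → ℝ, a ≠ 0 ∧
      r = rayleigh ρ ρ (fun x => ∑ i, a i * U i x) }, r ≤ Nf bN / Df b0 := by
    rintro r ⟨a, ha, rfl⟩
    rw [hray a]
    obtain ⟨b, hbS, hbne, hN, hP, hD, hQ⟩ := hnormlz a ha
    have hs2 : (0:ℝ) < ‖a‖^2 := pow_pos (norm_pos_iff.mpr ha) 2
    rw [hN, hD, mul_div_mul_left _ _ hs2.ne']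
    exact div_le_div₀ (hNnn bN) (hbNmax hbS) hcpos (hb0min hbS)
  have hRbdd : BddAbove { r : ℝ | ∃ a : Fin (k+1) → ℝ, a ≠ 0 ∧
      r = rayleigh ρ ρ (fun x => ∑ i, a i * U i x) } := ⟨_, hRb⟩
  have hsingle : (Pi.single (0 : Fin (k+1)) (1:ℝ) : Fin (k+1) → ℝ) ≠ 0 := by
    intro h
    have h1 : (Pi.single (0 : Fin (k+1)) (1:ℝ) : Fin (k+1) → ℝ) 0 = 1 := Pi.single_eq_same _ _
    rw [h] at h1
    exact one_ne_zero h1.symm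
  -- independence transfer
  have hplain : IndepPlain U := by
    intro a ha
    apply hUm a
    filter_upwards [ha] with x hx
    rw [mask_sum]
    split_ifs <;> simp [hx]
  refine ⟨Pf bP / Df b0, div_nonneg (hPnn bP) hcpos.le, ?_⟩
  intro ε hε
  have hmemS : sSup { r : ℝ | ∃ a : Fin (k+1) → ℝ, a ≠ 0 ∧
      r = rayleigh (fun x => ρ x + ε) (fun x => ρ x + ε^2) (fun x => ∑ i, a i * U i x) }
      ∈ { t : ℝ | ∃ V : Fin (k+1) → Sph n → ℝ,
        (∀ i, ContDiff ℝ (⊤ : ℕ∞) (V i)) ∧ IndepPlain V ∧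
        t = sSup { r : ℝ | ∃ a : Fin (k+1) → ℝ, a ≠ 0 ∧
          r = rayleigh (fun x => ρ x + ε) (fun x => ρ x + ε^2)
            (fun x => ∑ i, a i * V i x) } } := ⟨U, hUc, hplain, rfl⟩
  have hBddBelow : BddBelow { t : ℝ | ∃ V : Fin (k+1) → Sph n → ℝ,
      (∀ i, ContDiff ℝ (⊤ : ℕ∞) (V i)) ∧ IndepPlain V ∧
      t = sSup { r : ℝ | ∃ a : Fin (k+1) → ℝ, a ≠ 0 ∧
        r = rayleigh (fun x => ρ x + ε) (fun x => ρ x + ε^2)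
          (fun x => ∑ i, a i * V i x) } } := by
    refine ⟨0, ?_⟩
    rintro t' ⟨V, hVc, hVp, rfl⟩
    apply Real.sSup_nonneg
    rintro r ⟨a, ha, rfl⟩
    unfold rayleigh
    apply div_nonneg
    · exact integral_nonneg fun x =>
        mul_nonneg (add_nonneg (hρ.2 x).1 hε.le) (by positivity)
    · exact integral_nonneg fun x =>
        mul_nonneg (add_nonneg (hρ.2 x).1 (sq_nonneg ε)) (by positivity)
  have h1 : muEps n k ε ρ ≤ sSup { r : ℝ | ∃ a : Fin (k+1) → ℝ, a ≠ 0 ∧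
      r = rayleigh (fun x => ρ x + ε) (fun x => ρ x + ε^2) (fun x => ∑ i, a i * U i x) } := by
    rw [muEps]
    exact csInf_le hBddBelow hmemS
  apply le_trans h1
  apply csSup_le
  · exact ⟨_, ⟨(Pi.single (0 : Fin (k+1)) (1:ℝ) : Fin (k+1) → ℝ), hsingle, rfl⟩⟩
  rintro r ⟨a, ha, rfl⟩
  rw [hrayeps ε a]
  obtain ⟨b, hbS, hbne, hN, hP, hD, hQ⟩ := hnormlz a ha
  have hs2 : (0:ℝ) < ‖a‖^2 := pow_pos (norm_pos_iff.mpr ha) 2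
  have hDbpos : 0 < Df b := lt_of_lt_of_le hcpos (hb0min hbS)
  have e3 : (Nf a + ε * Pf a) / (Df a + ε^2 * Qf a)
      = (Nf b + ε * Pf b) / (Df b + ε^2 * Qf b) := by
    rw [hN, hP, hD, hQ]
    rw [show ‖a‖^2 * Nf b + ε * (‖a‖^2 * Pf b) = ‖a‖^2 * (Nf b + ε * Pf b) by ring,
      show ‖a‖^2 * Df b + ε^2 * (‖a‖^2 * Qf b) = ‖a‖^2 * (Df b + ε^2 * Qf b) by ring,
      mul_div_mul_left _ _ hs2.ne']
  rw [e3]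
  have e4 : (Nf b + ε * Pf b) / (Df b + ε^2 * Qf b) ≤ (Nf b + ε * Pf b) / Df b := by
    apply div_le_div_of_nonneg_left
    · exact add_nonneg (hNnn b) (mul_nonneg hε.le (hPnn b))
    · exact hDbpos
    · nlinarith [hQnn b, sq_nonneg ε]
  apply le_trans e4
  rw [add_div]
  apply add_le_add
  · apply le_csSup hRbdd
    exact ⟨b, hbne, (hray b).symm⟩
  · rw [mul_div_assoc]
    apply mul_le_mul_of_nonneg_left _ hε.le
    exact div_le_div₀ (hPnn bP) (hbPmax hbS) hcpos (hb0min hbS)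

end Key

section Witness

variable {n k : ℕ}

lemma contDiff_finset_prod {ι : Type*} (s : Finset ι) (f : ι → Sph n → ℝ)
    (hf : ∀ i, ContDiff ℝ (⊤ : ℕ∞) (f i)) : ContDiff ℝ (⊤ : ℕ∞) (fun x => ∏ i ∈ s, f i x) := by
  classical
  induction s using Finset.induction_on with
  | empty => simpa using contDiff_const
  | insert _ _ h ih =>
      simp only [Finset.prod_insert h]
      exact (hf _).mul ih

lemma muEps_nonneg (n k : ℕ) (ρ : Sph n → ℝ) (hρ : IsDensity ρ) {ε : ℝ} (hε : 0 < ε) :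
    0 ≤ muEps n k ε ρ := by
  rw [muEps]
  apply Real.sInf_nonneg
  rintro t ⟨V, hVc, hVp, rfl⟩
  apply Real.sSup_nonneg
  rintro r ⟨a, ha, rfl⟩
  unfold rayleigh
  apply div_nonneg
  · exact integral_nonneg fun x =>
      mul_nonneg (add_nonneg (hρ.2 x).1 hε.le) (by positivity)
  · exact integral_nonneg fun x =>
      mul_nonneg (add_nonneg (hρ.2 x).1 (sq_nonneg ε)) (by positivity)

lemma exists_indepMasked (n k : ℕ) (hn : 1 ≤ n) (ρ : Sph n → ℝ) (hρ : IsDensity ρ)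
    (hA : sphMeasure n {x : Sph n | 0 < ρ x} ≠ 0) :
    ∃ U : Fin (k+1) → Sph n → ℝ, (∀ i, ContDiff ℝ (⊤ : ℕ∞) (U i)) ∧ IndepMasked ρ U := by
  classical
  have hAmeas : MeasurableSet {x : Sph n | 0 < ρ x} := measurableSet_lt measurable_const hρ.1
  set A := {x : Sph n | 0 < ρ x} with hAdef
  set μ := (sphMeasure n).restrict A with hμdef
  have hμle : ∀ s : Set (Sph n), μ s ≤ sphMeasure n s := fun s =>
    Measure.le_iff'.mp Measure.restrict_le_self s
  obtain ⟨B, hBc, hBne, hBb⟩ := TopologicalSpace.exists_countable_basis (Sph n)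
  set N := ⋃₀ {b ∈ B | μ b = 0} with hNdef
  have hNnull : μ N = 0 :=
    (measure_sUnion_null_iff (hBc.mono (Set.sep_subset _ _))).mpr (fun s hs => hs.2)
  set G := A \ N with hGdef
  have hGμ : μ G ≠ 0 := by
    rw [hGdef, measure_diff_null hNnull, hμdef, Measure.restrict_apply_self]
    exact hA
  have hGball : ∀ x ∈ G, ∀ r : ℝ, 0 < r → μ (Metric.ball x r) ≠ 0 := by
    intro x hx r hr h0
    obtain ⟨b, hbB, hxb, hsub⟩ := hBb.exists_subset_of_mem_open (Metric.mem_ball_self hr)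
      Metric.isOpen_ball
    exact hx.2 ⟨b, ⟨hbB, measure_mono_null hsub h0⟩, hxb⟩
  have hsing : ∀ x : Sph n, μ {x} = 0 := fun x =>
    le_antisymm (le_trans (hμle {x}) (le_of_eq (sphMeasure_singleton n hn x))) (zero_le)
  haveI : NullSingletonClass μ := ⟨hsing⟩
  have hGinf : G.Infinite := fun hfin => hGμ (hfin.measure_zero μ)
  obtain ⟨T, hTsub, hTcard⟩ := hGinf.exists_subset_card_eq (k+1)
  set e := T.equivFinOfCardEq hTcard with hedef
  set p : Fin (k+1) → Sph n := fun i => (e.symm i : Sph n) with hpdef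
  have hpG : ∀ i, p i ∈ G := fun i => hTsub (e.symm i).2
  have hpinj : Function.Injective p := by
    intro i j hij
    have h1 : e.symm i = e.symm j := Subtype.ext hij
    have := congrArg e h1
    simpa using this
  set U : Fin (k+1) → Sph n → ℝ := fun i x => ∏ j ∈ Finset.Iio i, ‖x - p j‖^2 with hUdef
  have hUc : ∀ i, ContDiff ℝ (⊤ : ℕ∞) (U i) := fun i =>
    contDiff_finset_prod _ _ fun j =>
      ContDiff.norm_sq ℝ (contDiff_id.sub contDiff_const)
  have hUcont : ∀ i, Continuous (U i) := fun i => (hUc i).continuous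
  refine ⟨U, hUc, ?_⟩
  intro a ha
  have hvanish : ∀ i, (∑ j, a j * U j (p i)) = 0 := by
    intro i
    have hcont : Continuous (fun x : Sph n => ∑ j, a j * U j x) :=
      continuous_finset_sum _ fun j _ => continuous_const.mul (hUcont j)
    have hclosed : IsClosed {x : Sph n | (∑ j, a j * U j x) = 0} :=
      isClosed_eq hcont continuous_const
    have hmem : p i ∈ closure {x : Sph n | (∑ j, a j * U j x) = 0} := by
      rw [Metric.mem_closure_iff]
      intro r hr
      set Ebad := {x : Sph n | ¬ (∑ j, a j * mask ρ (U j) x = 0)} with hEdef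
      have hEσ : sphMeasure n Ebad = 0 := ha
      have hEμ : μ Ebad = 0 := le_antisymm (le_trans (hμle _) (le_of_eq hEσ)) (zero_le)
      have h2 : μ (Metric.ball (p i) r \ Ebad) ≠ 0 := by
        rw [measure_diff_null hEμ]
        exact hGball _ (hpG i) r hr
      rw [hμdef, Measure.restrict_apply' hAmeas] at h2
      obtain ⟨x, hx⟩ := nonempty_of_measure_ne_zero h2
      refine ⟨x, ?_, ?_⟩
      · have hxa : x ∈ A := hx.2
        have hxeq : ∑ j, a j * mask ρ (U j) x = 0 := not_not.mp hx.1.2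
        rw [mask_sum] at hxeq
        rwa [if_pos (show 0 < ρ x from hxa)] at hxeq
      · rw [dist_comm]
        exact hx.1.1
    rw [hclosed.closure_eq] at hmem
    exact hmem
  by_contra hane
  have hbad : (Finset.univ.filter (fun i => a i ≠ 0)).Nonempty := by
    obtain ⟨i, hi⟩ := Function.ne_iff.mp hane
    exact ⟨i, Finset.mem_filter.mpr ⟨Finset.mem_univ i, hi⟩⟩
  set i0 := (Finset.univ.filter (fun i => a i ≠ 0)).min' hbad with hi0def
  have hi0ne : a i0 ≠ 0 :=
    (Finset.mem_filter.mp ((Finset.univ.filter (fun i => a i ≠ 0)).min'_mem hbad)).2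
  have hlt : ∀ j, j < i0 → a j = 0 := by
    intro j hj
    by_contra haj
    exact absurd hj (not_lt.mpr (Finset.min'_le _ j
      (Finset.mem_filter.mpr ⟨Finset.mem_univ j, haj⟩)))
  have hU0 : ∀ j, i0 < j → U j (p i0) = 0 := by
    intro j hj
    apply Finset.prod_eq_zero (Finset.mem_Iio.mpr hj)
    simp
  have hsum := hvanish i0
  rw [Finset.sum_eq_single i0 (fun j _ hj => ?_) (fun h => absurd (Finset.mem_univ i0) h)]
    at hsum
  · have hpos : 0 < U i0 (p i0) := by
      apply Finset.prod_pos
      intro j hj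
      have hne : p i0 - p j ≠ 0 := sub_ne_zero.mpr
        (fun hpe => (Finset.mem_Iio.mp hj).ne' (hpinj hpe))
      exact pow_pos (norm_pos_iff.mpr hne) 2
    exact hi0ne ((mul_eq_zero.mp hsum).resolve_right hpos.ne')
  · rcases lt_or_gt_of_ne hj with h | h
    · rw [hlt j h, zero_mul]
    · rw [hU0 j h, mul_zero]

end Witness

end SphAux


/-- `limsup_{ε→0⁺} μ_k^ε(ρ) ≤ μ_k(ρ)`. -/
theorem limsup_muEps_le_mu (n k : ℕ) (hn : 1 ≤ n)
    (ρ : Sph n → ℝ) (hρ : IsDensity ρ)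
    (m : ℝ) (hm : 0 < m) (hmass : (∫ x, ρ x ∂ sphMeasure n) = m) :
    Filter.limsup (fun ε => muEps n k ε ρ) (𝓝[>] (0:ℝ)) ≤ mu n k ρ := by
  classical
  have hInt : Integrable ρ (sphMeasure n) := by
    by_contra h
    rw [integral_undef h] at hmass
    exact hm.ne' hmass.symm
  have hA : sphMeasure n {x : Sph n | 0 < ρ x} ≠ 0 := by
    intro h0
    have hzero : ρ =ᵐ[sphMeasure n] 0 := by
      rw [Filter.EventuallyEq, ae_iff]
      apply measure_mono_null _ h0
      intro x hx
      exact lt_of_le_of_ne (hρ.2 x).1 (Ne.symm hx)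
    rw [integral_congr_ae hzero] at hmass
    simp only [Pi.zero_apply, integral_zero] at hmass
    exact hm.ne' hmass.symm
  obtain ⟨W, hWc, hWm⟩ := SphAux.exists_indepMasked n k hn ρ hρ hA
  have hSne : { t : ℝ | ∃ U : Fin (k+1) → Sph n → ℝ,
      (∀ i, ContDiff ℝ (⊤ : ℕ∞) (U i)) ∧ IndepMasked ρ U ∧
      t = sSup { r : ℝ | ∃ a : Fin (k+1) → ℝ, a ≠ 0 ∧
        r = rayleigh ρ ρ (fun x => ∑ i, a i * U i x) } }.Nonempty :=
    ⟨_, W, hWc, hWm, rfl⟩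
  rw [mu]
  apply le_csInf hSne
  rintro t ⟨U, hUc, hUm, rfl⟩
  obtain ⟨K, hK0, hKb⟩ := SphAux.key n k ρ hρ U hUc hUm
  have hcb : IsCoboundedUnder (· ≤ ·) (𝓝[>] (0:ℝ)) (fun ε => muEps n k ε ρ) := by
    apply Filter.IsBoundedUnder.isCoboundedUnder_le
    refine ⟨0, ?_⟩
    rw [Filter.eventually_map]
    filter_upwards [self_mem_nhdsWithin] with ε hε
    exact SphAux.muEps_nonneg n k ρ hρ hε
  apply le_of_forall_pos_le_add
  intro δ hδ
  have hev : ∀ᶠ ε in 𝓝[>] (0:ℝ), muEps n k ε ρ ≤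
      sSup { r : ℝ | ∃ a : Fin (k+1) → ℝ, a ≠ 0 ∧
        r = rayleigh ρ ρ (fun x => ∑ i, a i * U i x) } + δ := by
    have hIoo : Set.Ioo (0:ℝ) (δ / (K+1)) ∈ 𝓝[>] (0:ℝ) :=
      Ioo_mem_nhdsGT_of_mem ⟨le_rfl, by positivity⟩
    filter_upwards [hIoo] with ε hε
    have h1 := hKb ε hε.1
    have h2 : ε * K ≤ δ := by
      have h3 : ε * K ≤ (δ/(K+1)) * K :=
        mul_le_mul_of_nonneg_right hε.2.le hK0
      have h4 : (δ/(K+1)) * K ≤ δ := by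
        rw [div_mul_eq_mul_div, div_le_iff₀ (by positivity)]
        nlinarith
      linarith
    linarith
  exact limsup_le_of_le hcb hev
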